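/- For every r₀ > 0 and every K ∈ ℝ there exists a constant C > 0 with the following property. Let (U, A, ν, R) with twist constant K be a smooth conformal solution on [τ₀,τ₁) with R(τ,ξ) ≥ r₀ for all (τ,ξ), and suppose τ₁ − τ₀ ≤ 1. Then for every τ ∈ [τ₀,τ₁): (i) ‖R‖_{C¹([τ₀,τ]×ℝ)} ≤ C ( (τ − τ₀) · sup_{[τ₀,τ]×ℝ} e^{2ν} + sup_ξ (|R| + |R_τ| + |R_ξ|)(τ₀,ξ) ); (ii) if moreover R_u(τ₀,·) > 0 and R_v(τ₀,·) > 0, then (R_τ² − R_ξ²)(τ,ξ) ≥ (inf_{ξ'} R_u(τ₀,ξ'))·(inf_{ξ'} R_v(τ₀,ξ')) for all ξ. Here ‖R‖_{C¹([τ₀,τ]×ℝ)} := sup over [τ₀,τ]×ℝ of (|R| + |R_τ| + |R_ξ|), R_u := R_τ − R_ξ and R_v := R_τ + R_ξ. -/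

import Mathlib

open Real

noncomputable section

/-- Partial derivative in the first (time) variable. -/
def pd1 (f : ℝ → ℝ → ℝ) (x y : ℝ) : ℝ := deriv (fun s => f s y) x

/-- Partial derivative in the second (space) variable. -/
def pd2 (f : ℝ → ℝ → ℝ) (x y : ℝ) : ℝ := deriv (fun s => f x s) y

/-- A smooth solution `(U, A, ν, R)` of the `T²`-symmetric vacuum Einstein equations
in conformal coordinates, with twist constant `K`, on the time set `D` (times `ℝ` in
the space variable `ξ`, with all coefficients `2π`-periodic in `ξ` and `R > 0`).
The equations are the constraints (C1), (C2) and the evolution equations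
(E1)–(E4) of the paper. -/
structure ConfSol (D : Set ℝ) (K : ℝ) where
  U : ℝ → ℝ → ℝ
  A : ℝ → ℝ → ℝ
  ν : ℝ → ℝ → ℝ
  R : ℝ → ℝ → ℝ
  smooth_U : ContDiff ℝ (⊤ : ℕ∞) (Function.uncurry U)
  smooth_A : ContDiff ℝ (⊤ : ℕ∞) (Function.uncurry A)
  smooth_ν : ContDiff ℝ (⊤ : ℕ∞) (Function.uncurry ν)
  smooth_R : ContDiff ℝ (⊤ : ℕ∞) (Function.uncurry R)
  periodic_U : ∀ τ ξ : ℝ, U τ (ξ + 2 * π) = U τ ξ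
  periodic_A : ∀ τ ξ : ℝ, A τ (ξ + 2 * π) = A τ ξ
  periodic_ν : ∀ τ ξ : ℝ, ν τ (ξ + 2 * π) = ν τ ξ
  periodic_R : ∀ τ ξ : ℝ, R τ (ξ + 2 * π) = R τ ξ
  Rpos : ∀ τ ∈ D, ∀ ξ : ℝ, 0 < R τ ξ
  constraint1 : ∀ τ ∈ D, ∀ ξ : ℝ,
    (pd1 U τ ξ) ^ 2 + (pd2 U τ ξ) ^ 2
      + exp (4 * U τ ξ) / (4 * (R τ ξ) ^ 2) * ((pd1 A τ ξ) ^ 2 + (pd2 A τ ξ) ^ 2)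
      + pd2 (pd2 R) τ ξ / R τ ξ
      - pd1 ν τ ξ * pd1 R τ ξ / R τ ξ
      - pd2 ν τ ξ * pd2 R τ ξ / R τ ξ
      + exp (2 * ν τ ξ) * K ^ 2 / (4 * (R τ ξ) ^ 4) = 0
  constraint2 : ∀ τ ∈ D, ∀ ξ : ℝ,
    2 * pd1 U τ ξ * pd2 U τ ξ
      + exp (4 * U τ ξ) / (2 * (R τ ξ) ^ 2) * (pd1 A τ ξ * pd2 A τ ξ)
      + pd1 (pd2 R) τ ξ / R τ ξ
      - pd2 ν τ ξ * pd1 R τ ξ / R τ ξ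
      - pd1 ν τ ξ * pd2 R τ ξ / R τ ξ = 0
  evol_U : ∀ τ ∈ D, ∀ ξ : ℝ,
    pd1 (pd1 U) τ ξ - pd2 (pd2 U) τ ξ
      = pd2 R τ ξ * pd2 U τ ξ / R τ ξ - pd1 R τ ξ * pd1 U τ ξ / R τ ξ
        + exp (4 * U τ ξ) / (2 * (R τ ξ) ^ 2) * ((pd1 A τ ξ) ^ 2 - (pd2 A τ ξ) ^ 2)
  evol_A : ∀ τ ∈ D, ∀ ξ : ℝ,
    pd1 (pd1 A) τ ξ - pd2 (pd2 A) τ ξ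
      = pd1 R τ ξ * pd1 A τ ξ / R τ ξ - pd2 R τ ξ * pd2 A τ ξ / R τ ξ
        + 4 * (pd2 A τ ξ * pd2 U τ ξ - pd1 A τ ξ * pd1 U τ ξ)
  evol_R : ∀ τ ∈ D, ∀ ξ : ℝ,
    pd1 (pd1 R) τ ξ - pd2 (pd2 R) τ ξ
      = exp (2 * ν τ ξ) * K ^ 2 / (2 * (R τ ξ) ^ 3)
  evol_ν : ∀ τ ∈ D, ∀ ξ : ℝ,
    pd1 (pd1 ν) τ ξ - pd2 (pd2 ν) τ ξ
      = (pd2 U τ ξ) ^ 2 - (pd1 U τ ξ) ^ 2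
        + exp (4 * U τ ξ) / (4 * (R τ ξ) ^ 2) * ((pd1 A τ ξ) ^ 2 - (pd2 A τ ξ) ^ 2)
        - 3 * exp (2 * ν τ ξ) * K ^ 2 / (4 * (R τ ξ) ^ 4)

/-- The conformal energy `𝓔_conf(τ)`. -/
def Econf (K : ℝ) (U A ν R : ℝ → ℝ → ℝ) (τ : ℝ) : ℝ :=
  ∫ ξ in (0:ℝ)..(2 * π),
    (R τ ξ * ((pd1 U τ ξ) ^ 2 + (pd2 U τ ξ) ^ 2)
      + exp (4 * U τ ξ) / (4 * R τ ξ) * ((pd1 A τ ξ) ^ 2 + (pd2 A τ ξ) ^ 2)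
      + exp (2 * ν τ ξ) * K ^ 2 / (4 * (R τ ξ) ^ 3))

/-- The sup of a function over the strip `[τ₀,τ] × ℝ`. -/
def supStrip (f : ℝ → ℝ → ℝ) (τ₀ τ : ℝ) : ℝ :=
  sSup ((fun p : ℝ × ℝ => f p.1 p.2) '' (Set.Icc τ₀ τ ×ˢ (Set.univ : Set ℝ)))

/-- The `C¹` norm `‖R‖_{C¹([τ₀,τ]×ℝ)} = sup (|R| + |R_τ| + |R_ξ|)`. -/
def C1norm (R : ℝ → ℝ → ℝ) (τ₀ τ : ℝ) : ℝ :=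
  supStrip (fun t x => |R t x| + |pd1 R t x| + |pd2 R t x|) τ₀ τ

/-- The `L²` norm on `[0,2π]`. -/
def L2n (f : ℝ → ℝ) : ℝ := Real.sqrt (∫ ξ in (0:ℝ)..(2 * π), (f ξ) ^ 2)

/-- The `L¹` norm on `[0,2π]`. -/
def L1n (f : ℝ → ℝ) : ℝ := ∫ ξ in (0:ℝ)..(2 * π), |f ξ|

/-- The `H¹` norm on `[0,2π]`. -/
def H1n (f : ℝ → ℝ) : ℝ := L2n f + L2n (deriv f)

/-- The `W^{1,1}` norm on `[0,2π]`. -/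
def W11n (f : ℝ → ℝ) : ℝ := L1n f + L1n (deriv f)

/-- The `W^{2,1}` norm on `[0,2π]`. -/
def W21n (f : ℝ → ℝ) : ℝ := L1n f + L1n (deriv f) + L1n (deriv (deriv f))

/-- The total norm `N(τ)` of a conformal solution. -/
def Nnorm (U A ν R : ℝ → ℝ → ℝ) (τ : ℝ) : ℝ :=
  H1n (U τ) + H1n (A τ)
    + L2n (fun ξ => pd1 U τ ξ) + L2n (fun ξ => pd1 A τ ξ)
    + W11n (ν τ) + L1n (fun ξ => pd1 ν τ ξ)
    + W21n (R τ) + W11n (fun ξ => pd1 R τ ξ)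
    + (⨆ ξ : ℝ, 1 / R τ ξ)
    + 1 / ((⨅ ξ : ℝ, (pd1 R τ ξ - pd2 R τ ξ)) * (⨅ ξ : ℝ, (pd1 R τ ξ + pd2 R τ ξ)))

end

/-!
By (E3) the area function solves the wave equation `□R = R_ττ - R_ξξ = e^{2ν} K² / (2 R³)`, so
`0 ≤ □R ≤ K² sup e^{2ν} / (2 r₀³)` as long as `R ≥ r₀`. Along the characteristics `ξ - τ = c`
and `ξ + τ = c` the null derivatives `R_u = R_τ - R_ξ` and `R_v = R_τ + R_ξ` change at the rate
`□R`; hence they are nondecreasing there, which gives (ii), and they grow at most linearly in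
time. Since `|R_τ| + |R_ξ| = max (|R_u|, |R_v|)`, this bounds the first derivatives, and
integrating `R_τ` over a time interval of length `≤ 1` bounds `R` itself.
-/

open Function Set

section PartialDerivatives

variable {f : ℝ → ℝ → ℝ}

theorem pd1_eq_fderiv (hf : Differentiable ℝ (uncurry f)) (t x : ℝ) :
    pd1 f t x = fderiv ℝ (uncurry f) (t, x) (1, 0) :=
  ((hf (t, x)).hasFDerivAt.comp_hasDerivAt (f := fun s => (s, x)) t
    ((hasDerivAt_id t).prodMk (hasDerivAt_const t x))).deriv

theorem pd2_eq_fderiv (hf : Differentiable ℝ (uncurry f)) (t x : ℝ) :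
    pd2 f t x = fderiv ℝ (uncurry f) (t, x) (0, 1) :=
  ((hf (t, x)).hasFDerivAt.comp_hasDerivAt (f := fun s => (t, s)) x
    ((hasDerivAt_const x t).prodMk (hasDerivAt_id x))).deriv

theorem hasDerivAt_pd1 (hf : Differentiable ℝ (uncurry f)) (t x : ℝ) :
    HasDerivAt (fun s => f s x) (pd1 f t x) t :=
  ((hf (t, x)).comp (f := fun s => (s, x)) t
    (differentiableAt_id.prodMk (differentiableAt_const x))).hasDerivAt

theorem continuous_uncurry_pd1 (hf : ContDiff ℝ 1 (uncurry f)) : Continuous (uncurry (pd1 f)) := by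
  have : uncurry (pd1 f) = fun p => fderiv ℝ (uncurry f) p (1, 0) :=
    funext fun p => pd1_eq_fderiv (hf.differentiable one_ne_zero) p.1 p.2
  rw [this]
  exact (hf.continuous_fderiv one_ne_zero).clm_apply continuous_const

theorem continuous_uncurry_pd2 (hf : ContDiff ℝ 1 (uncurry f)) : Continuous (uncurry (pd2 f)) := by
  have : uncurry (pd2 f) = fun p => fderiv ℝ (uncurry f) p (0, 1) :=
    funext fun p => pd2_eq_fderiv (hf.differentiable one_ne_zero) p.1 p.2
  rw [this]
  exact (hf.continuous_fderiv one_ne_zero).clm_apply continuous_const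

theorem pd1_add_period {T : ℝ} (hp : ∀ t x, f t (x + T) = f t x) (t x : ℝ) :
    pd1 f t (x + T) = pd1 f t x := by
  simp only [pd1, hp]

theorem pd2_add_period {T : ℝ} (hp : ∀ t x, f t (x + T) = f t x) (t x : ℝ) :
    pd2 f t (x + T) = pd2 f t x := by
  rw [pd2, ← deriv_comp_add_const, pd2]
  simp only [hp]

end PartialDerivatives

noncomputable def dalembert (f : ℝ → ℝ → ℝ) (t x : ℝ) : ℝ := pd1 (pd1 f) t x - pd2 (pd2 f) t x

/-- `nullDeriv 1 f` and `nullDeriv (-1) f` are the paper's `f_u = f_τ - f_ξ` and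
`f_v = f_τ + f_ξ`. -/
noncomputable def nullDeriv (σ : ℝ) (f : ℝ → ℝ → ℝ) (t x : ℝ) : ℝ := pd1 f t x - σ * pd2 f t x

section Characteristics

variable {f : ℝ → ℝ → ℝ}

theorem hasDerivAt_fderiv_apply_comp {g : ℝ × ℝ → ℝ} (hg : ContDiff ℝ 2 g) {γ : ℝ → ℝ × ℝ}
    {v : ℝ × ℝ} {t : ℝ} (hγ : HasDerivAt γ v t) (w : ℝ × ℝ) :
    HasDerivAt (fun s => fderiv ℝ g (γ s) w) (fderiv ℝ (fderiv ℝ g) (γ t) v w) t := by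
  have hDg : Differentiable ℝ (fderiv ℝ g) :=
    (hg.fderiv_right (m := 1) le_rfl).differentiable one_ne_zero
  simpa using ((hDg (γ t)).hasFDerivAt.comp_hasDerivAt t hγ).clm_apply (hasDerivAt_const t w)

theorem pd1_pd1_eq_fderiv_fderiv (hf : ContDiff ℝ 2 (uncurry f)) (t x : ℝ) :
    pd1 (pd1 f) t x = fderiv ℝ (fderiv ℝ (uncurry f)) (t, x) (1, 0) (1, 0) := by
  have h : (fun s => pd1 f s x) = fun s => fderiv ℝ (uncurry f) (s, x) (1, 0) :=
    funext fun s => pd1_eq_fderiv (hf.differentiable two_ne_zero) s x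
  rw [pd1, h]
  exact (hasDerivAt_fderiv_apply_comp hf
    ((hasDerivAt_id t).prodMk (hasDerivAt_const t x)) (1, 0)).deriv

theorem pd2_pd2_eq_fderiv_fderiv (hf : ContDiff ℝ 2 (uncurry f)) (t x : ℝ) :
    pd2 (pd2 f) t x = fderiv ℝ (fderiv ℝ (uncurry f)) (t, x) (0, 1) (0, 1) := by
  have h : (fun s => pd2 f t s) = fun s => fderiv ℝ (uncurry f) (t, s) (0, 1) :=
    funext fun s => pd2_eq_fderiv (hf.differentiable two_ne_zero) t s
  rw [pd2, h]
  exact (hasDerivAt_fderiv_apply_comp hf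
    ((hasDerivAt_const x t).prodMk (hasDerivAt_id x)) (0, 1)).deriv

/-- The mixed second derivatives cancel by symmetry, and `σ² = 1` turns `σ² f_ξξ` into `f_ξξ`. -/
theorem hasDerivAt_nullDeriv_characteristic (hf : ContDiff ℝ 2 (uncurry f)) {σ : ℝ}
    (hσ : σ ^ 2 = 1) (c t : ℝ) :
    HasDerivAt (fun s => nullDeriv σ f s (c + σ * s)) (dalembert f t (c + σ * t)) t := by
  have hγ : HasDerivAt (fun s => (s, c + σ * s)) ((1, σ) : ℝ × ℝ) t := by
    simpa using (hasDerivAt_id t).prodMk (((hasDerivAt_id t).const_mul σ).const_add c)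
  have h := (hasDerivAt_fderiv_apply_comp hf hγ (1, 0)).fun_sub
    ((hasDerivAt_fderiv_apply_comp hf hγ (0, 1)).const_mul σ)
  set D := fderiv ℝ (fderiv ℝ (uncurry f)) (t, c + σ * t)
  have hsymm : D (1, 0) (0, 1) = D (0, 1) (1, 0) :=
    (hf.contDiffAt.isSymmSndFDerivAt (by simp)) _ _
  have hv : ((1, σ) : ℝ × ℝ) = (1, 0) + σ • (0, 1) := by simp
  have hfun : (fun s => nullDeriv σ f s (c + σ * s)) = fun s =>
      fderiv ℝ (uncurry f) (s, c + σ * s) (1, 0)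
        - σ * fderiv ℝ (uncurry f) (s, c + σ * s) (0, 1) :=
    funext fun s => by
      rw [nullDeriv, pd1_eq_fderiv (hf.differentiable two_ne_zero),
        pd2_eq_fderiv (hf.differentiable two_ne_zero)]
  rw [hfun]
  refine h.congr_deriv ?_
  rw [dalembert, pd1_pd1_eq_fderiv_fderiv hf, pd2_pd2_eq_fderiv_fderiv hf, hv, map_add, map_smul]
  simp only [add_apply, smul_apply, smul_eq_mul]
  linear_combination (-σ) * hsymm - D (0, 1) (0, 1) * hσ

end Characteristics

theorem nullDeriv_one (f : ℝ → ℝ → ℝ) (t x : ℝ) : nullDeriv 1 f t x = pd1 f t x - pd2 f t x := by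
  rw [nullDeriv, one_mul]

theorem nullDeriv_neg_one (f : ℝ → ℝ → ℝ) (t x : ℝ) :
    nullDeriv (-1) f t x = pd1 f t x + pd2 f t x := by
  rw [nullDeriv, neg_one_mul, sub_neg_eq_add]

theorem abs_add_abs_le_iff {a b B : ℝ} : |a| + |b| ≤ B ↔ |a - b| ≤ B ∧ |a + b| ≤ B := by
  refine ⟨fun h => ⟨(abs_sub a b).trans h, (abs_add_le a b).trans h⟩, fun ⟨h₁, h₂⟩ => ?_⟩
  rw [abs_le] at h₁ h₂
  rcases abs_cases a with ⟨ha, -⟩ | ⟨ha, -⟩ <;> rcases abs_cases b with ⟨hb, -⟩ | ⟨hb, -⟩ <;>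
    linarith

section WaveInequality

variable {R : ℝ → ℝ → ℝ} {σ τ₀ τ t : ℝ}

theorem mul_le_nullDeriv_sub_of_le_dalembert (hR : ContDiff ℝ 2 (uncurry R)) (hσ : σ ^ 2 = 1)
    {m : ℝ} (hm : ∀ t ∈ Icc τ₀ τ, ∀ x, m ≤ dalembert R t x) (c : ℝ) (ht : t ∈ Icc τ₀ τ) :
    m * (t - τ₀) ≤ nullDeriv σ R t (c + σ * t) - nullDeriv σ R τ₀ (c + σ * τ₀) := by
  have hd := hasDerivAt_nullDeriv_characteristic hR hσ c
  refine (convex_Icc τ₀ t).mul_sub_le_image_sub_of_le_deriv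
    (fun s _ => (hd s).continuousAt.continuousWithinAt)
    (fun s _ => (hd s).differentiableAt.differentiableWithinAt) (fun s hs => ?_)
    τ₀ (left_mem_Icc.2 ht.1) t (right_mem_Icc.2 ht.1) ht.1
  rw [interior_Icc] at hs
  rw [(hd s).deriv]
  exact hm s ⟨hs.1.le, hs.2.le.trans ht.2⟩ _

theorem nullDeriv_sub_le_mul_of_dalembert_le (hR : ContDiff ℝ 2 (uncurry R)) (hσ : σ ^ 2 = 1)
    {M : ℝ} (hM : ∀ t ∈ Icc τ₀ τ, ∀ x, dalembert R t x ≤ M) (c : ℝ) (ht : t ∈ Icc τ₀ τ) :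
    nullDeriv σ R t (c + σ * t) - nullDeriv σ R τ₀ (c + σ * τ₀) ≤ M * (t - τ₀) := by
  have hd := hasDerivAt_nullDeriv_characteristic hR hσ c
  refine (convex_Icc τ₀ t).image_sub_le_mul_sub_of_deriv_le
    (fun s _ => (hd s).continuousAt.continuousWithinAt)
    (fun s _ => (hd s).differentiableAt.differentiableWithinAt) (fun s hs => ?_)
    τ₀ (left_mem_Icc.2 ht.1) t (right_mem_Icc.2 ht.1) ht.1
  rw [interior_Icc] at hs
  rw [(hd s).deriv]
  exact hM s ⟨hs.1.le, hs.2.le.trans ht.2⟩ _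

theorem iInf_nullDeriv_le (hR : ContDiff ℝ 2 (uncurry R)) (hσ : σ ^ 2 = 1)
    (hm : ∀ t ∈ Icc τ₀ τ, ∀ x, 0 ≤ dalembert R t x) (hpos : ∀ y, 0 ≤ nullDeriv σ R τ₀ y)
    (ht : t ∈ Icc τ₀ τ) (x : ℝ) : ⨅ y, nullDeriv σ R τ₀ y ≤ nullDeriv σ R t x := by
  have h := mul_le_nullDeriv_sub_of_le_dalembert hR hσ hm (x - σ * t) ht
  rw [sub_add_cancel, zero_mul] at h
  exact (ciInf_le ⟨0, by rintro _ ⟨y, rfl⟩; exact hpos y⟩ _).trans (sub_nonneg.1 h)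

theorem abs_nullDeriv_le {M S : ℝ} (hR : ContDiff ℝ 2 (uncurry R)) (hσ : σ ^ 2 = 1)
    (hbox : ∀ t ∈ Icc τ₀ τ, ∀ x, 0 ≤ dalembert R t x ∧ dalembert R t x ≤ M)
    (h₀ : ∀ y, |nullDeriv σ R τ₀ y| ≤ S) (ht : t ∈ Icc τ₀ τ) (x : ℝ) :
    |nullDeriv σ R t x| ≤ S + M * (t - τ₀) := by
  have hlo := mul_le_nullDeriv_sub_of_le_dalembert hR hσ (fun t ht x => (hbox t ht x).1)
    (x - σ * t) ht
  have hup := nullDeriv_sub_le_mul_of_dalembert_le hR hσ (fun t ht x => (hbox t ht x).2)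
    (x - σ * t) ht
  rw [sub_add_cancel] at hlo hup
  have hM : 0 ≤ M * (t - τ₀) :=
    mul_nonneg ((hbox t ht x).1.trans (hbox t ht x).2) (sub_nonneg.2 ht.1)
  have h₀' := abs_le.1 (h₀ (x - σ * t + σ * τ₀))
  rw [abs_le]
  constructor <;> linarith

theorem abs_pd1_add_abs_pd2_le {M S : ℝ} (hR : ContDiff ℝ 2 (uncurry R))
    (hbox : ∀ t ∈ Icc τ₀ τ, ∀ x, 0 ≤ dalembert R t x ∧ dalembert R t x ≤ M)
    (h₀ : ∀ y, |pd1 R τ₀ y| + |pd2 R τ₀ y| ≤ S) (ht : t ∈ Icc τ₀ τ) (x : ℝ) :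
    |pd1 R t x| + |pd2 R t x| ≤ S + M * (t - τ₀) := by
  rw [abs_add_abs_le_iff, ← nullDeriv_one, ← nullDeriv_neg_one]
  refine ⟨abs_nullDeriv_le hR (by norm_num) hbox (fun y => ?_) ht x,
    abs_nullDeriv_le hR (by norm_num) hbox (fun y => ?_) ht x⟩
  · rw [nullDeriv_one]
    exact (abs_add_abs_le_iff.1 (h₀ y)).1
  · rw [nullDeriv_neg_one]
    exact (abs_add_abs_le_iff.1 (h₀ y)).2

theorem abs_add_abs_pd1_add_abs_pd2_le {M S : ℝ} (hR : ContDiff ℝ 2 (uncurry R))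
    (hbox : ∀ t ∈ Icc τ₀ τ, ∀ x, 0 ≤ dalembert R t x ∧ dalembert R t x ≤ M)
    (h₀ : ∀ y, |R τ₀ y| + |pd1 R τ₀ y| + |pd2 R τ₀ y| ≤ S) (hτ : τ - τ₀ ≤ 1)
    (ht : t ∈ Icc τ₀ τ) (x : ℝ) :
    |R t x| + |pd1 R t x| + |pd2 R t x| ≤ 3 * S + 2 * M * (τ - τ₀) := by
  set B := S + M * (τ - τ₀) with hB_def
  have hM : 0 ≤ M := (hbox t ht x).1.trans (hbox t ht x).2
  have hder : ∀ s ∈ Icc τ₀ τ, |pd1 R s x| + |pd2 R s x| ≤ B := fun s hs =>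
    calc |pd1 R s x| + |pd2 R s x| ≤ S + M * (s - τ₀) :=
          abs_pd1_add_abs_pd2_le hR hbox (fun y => by linarith [h₀ y, abs_nonneg (R τ₀ y)]) hs x
      _ ≤ B := by linarith [mul_le_mul_of_nonneg_left (sub_le_sub_right hs.2 τ₀) hM]
  have hdisp : |R t x - R τ₀ x| ≤ B * (t - τ₀) :=
    norm_image_sub_le_of_norm_deriv_le_segment' (f := fun s => R s x)
      (fun s _ => (hasDerivAt_pd1 (hR.differentiable two_ne_zero) s x).hasDerivWithinAt)
      (fun s hs => by
        linarith [Real.norm_eq_abs (pd1 R s x), hder s ⟨hs.1, hs.2.le⟩, abs_nonneg (pd2 R s x)])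
      t ht
  have hB : B * (t - τ₀) ≤ B :=
    mul_le_of_le_one_right ((add_nonneg (abs_nonneg _) (abs_nonneg _)).trans (hder t ht))
      (by linarith [ht.2])
  linarith [abs_sub_abs_le_abs_sub (R t x) (R τ₀ x), hder t ht, h₀ x, abs_nonneg (pd1 R τ₀ x),
    abs_nonneg (pd2 R τ₀ x)]

theorem C1norm_le {M S : ℝ} (hR : ContDiff ℝ 2 (uncurry R))
    (hbox : ∀ t ∈ Icc τ₀ τ, ∀ x, 0 ≤ dalembert R t x ∧ dalembert R t x ≤ M)
    (h₀ : ∀ y, |R τ₀ y| + |pd1 R τ₀ y| + |pd2 R τ₀ y| ≤ S) (hτ₀ : τ₀ ≤ τ) (hτ : τ - τ₀ ≤ 1) :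
    C1norm R τ₀ τ ≤ 3 * S + 2 * M * (τ - τ₀) := by
  refine csSup_le ⟨_, (τ₀, 0), ⟨⟨le_rfl, hτ₀⟩, trivial⟩, rfl⟩ ?_
  rintro _ ⟨⟨t, x⟩, ⟨ht, -⟩, rfl⟩
  exact abs_add_abs_pd1_add_abs_pd2_le hR hbox h₀ hτ ht x

theorem iInf_mul_iInf_le_sq_sub_sq (hR : ContDiff ℝ 2 (uncurry R))
    (hm : ∀ t ∈ Icc τ₀ τ, ∀ x, 0 ≤ dalembert R t x)
    (hu : ∀ y, 0 < pd1 R τ₀ y - pd2 R τ₀ y) (hv : ∀ y, 0 < pd1 R τ₀ y + pd2 R τ₀ y)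
    (ht : t ∈ Icc τ₀ τ) (x : ℝ) :
    (⨅ y, (pd1 R τ₀ y - pd2 R τ₀ y)) * (⨅ y, (pd1 R τ₀ y + pd2 R τ₀ y))
      ≤ pd1 R t x ^ 2 - pd2 R t x ^ 2 := by
  have hu' := iInf_nullDeriv_le (σ := 1) hR (by norm_num) hm
    (fun y => (nullDeriv_one R τ₀ y).symm ▸ (hu y).le) ht x
  have hv' := iInf_nullDeriv_le (σ := -1) hR (by norm_num) hm
    (fun y => (nullDeriv_neg_one R τ₀ y).symm ▸ (hv y).le) ht x
  simp only [nullDeriv_one, nullDeriv_neg_one] at hu' hv'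
  rw [sq_sub_sq, mul_comm (pd1 R t x + pd2 R t x)]
  exact mul_le_mul hu' hv' (le_ciInf fun y => (hv y).le) ((le_ciInf fun y => (hu y).le).trans hu')

end WaveInequality

section PeriodicStrip

variable {g : ℝ → ℝ → ℝ} {T : ℝ}

theorem bddAbove_image_Icc_prod_univ (hg : Continuous (uncurry g)) (hT : 0 < T)
    (hp : ∀ t x, g t (x + T) = g t x) (a b : ℝ) :
    BddAbove ((fun p : ℝ × ℝ => g p.1 p.2) '' (Icc a b ×ˢ univ)) := by
  have hK : IsCompact (Icc a b ×ˢ Icc 0 T) := isCompact_Icc.prod isCompact_Icc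
  refine (hK.image hg).bddAbove.mono ?_
  rintro _ ⟨⟨t, x⟩, ⟨ht, -⟩, rfl⟩
  obtain ⟨y, hy, hxy⟩ := Periodic.exists_mem_Ico₀ (hp t) hT x
  exact ⟨(t, y), ⟨ht, Ico_subset_Icc_self hy⟩, hxy.symm⟩

theorem le_supStrip (hg : Continuous (uncurry g)) (hT : 0 < T) (hp : ∀ t x, g t (x + T) = g t x)
    {a b t : ℝ} (ht : t ∈ Icc a b) (x : ℝ) : g t x ≤ supStrip g a b :=
  le_csSup (bddAbove_image_Icc_prod_univ hg hT hp a b) ⟨(t, x), ⟨ht, trivial⟩, rfl⟩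

theorem bddAbove_range_of_periodic (hg : Continuous (uncurry g)) (hT : 0 < T)
    (hp : ∀ t x, g t (x + T) = g t x) (a : ℝ) : BddAbove (range (g a)) := by
  refine (bddAbove_image_Icc_prod_univ hg hT hp a a).mono ?_
  rintro _ ⟨x, rfl⟩
  exact ⟨(a, x), ⟨left_mem_Icc.2 le_rfl, trivial⟩, rfl⟩

theorem bddAbove_range_abs_add_abs_pd1_add_abs_pd2 {R : ℝ → ℝ → ℝ}
    (hR : ContDiff ℝ 1 (uncurry R)) (hT : 0 < T) (hp : ∀ t x, R t (x + T) = R t x) (a : ℝ) :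
    BddAbove (range fun x => |R a x| + |pd1 R a x| + |pd2 R a x|) :=
  bddAbove_range_of_periodic (g := fun t x => |R t x| + |pd1 R t x| + |pd2 R t x|)
    ((hR.continuous.abs.add (continuous_uncurry_pd1 hR).abs).add (continuous_uncurry_pd2 hR).abs)
    hT (fun t x => by rw [hp, pd1_add_period hp, pd2_add_period hp]) a

end PeriodicStrip

namespace ConfSol

variable {D : Set ℝ} {K : ℝ} (S : ConfSol D K)

theorem contDiff_R (n : ℕ) : ContDiff ℝ n (uncurry S.R) :=
  S.smooth_R.of_le (by exact_mod_cast le_top)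

theorem dalembert_R_nonneg {t : ℝ} (ht : t ∈ D) (x : ℝ) : 0 ≤ dalembert S.R t x := by
  have := S.Rpos t ht x
  rw [dalembert, S.evol_R t ht x]
  positivity

theorem dalembert_R_le {r₀ t x : ℝ} (hr₀ : 0 < r₀) (ht : t ∈ D) (hR : r₀ ≤ S.R t x) :
    dalembert S.R t x ≤ K ^ 2 / (2 * r₀ ^ 3) * exp (2 * S.ν t x) := by
  rw [dalembert, S.evol_R t ht x, div_mul_eq_mul_div, mul_comm (K ^ 2)]
  gcongr

end ConfSol

/-- **First-order estimates on the area function in conformal coordinates.**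
For every `r₀ > 0` and `K` there is `C > 0` such that any smooth conformal solution
with twist constant `K`, with `R ≥ r₀`, defined on an interval of length `≤ 1`,
satisfies (i) `‖R‖_{C¹} ≤ C((τ−τ₀)·sup e^{2ν} + sup_ξ(|R|+|R_τ|+|R_ξ|)(τ₀,·))` and
(ii) if `R_u(τ₀,·) > 0` and `R_v(τ₀,·) > 0` then
`R_τ² − R_ξ² ≥ (inf R_u(τ₀,·))(inf R_v(τ₀,·))`. -/
theorem area_function_first_order_estimates (r₀ K : ℝ) (hr₀ : 0 < r₀) :
    ∃ C : ℝ, 0 < C ∧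
      ∀ τ₀ τ₁ : ℝ, τ₀ < τ₁ → τ₁ - τ₀ ≤ 1 →
        ∀ S : ConfSol (Set.Ico τ₀ τ₁) K,
          (∀ τ ∈ Set.Ico τ₀ τ₁, ∀ ξ : ℝ, r₀ ≤ S.R τ ξ) →
          ∀ τ ∈ Set.Ico τ₀ τ₁,
            (C1norm S.R τ₀ τ ≤
              C * ((τ - τ₀) * supStrip (fun t x => Real.exp (2 * S.ν t x)) τ₀ τ
                + (⨆ ξ : ℝ, (|S.R τ₀ ξ| + |pd1 S.R τ₀ ξ| + |pd2 S.R τ₀ ξ|)))) ∧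
            ((∀ ξ : ℝ, 0 < pd1 S.R τ₀ ξ - pd2 S.R τ₀ ξ) →
              (∀ ξ : ℝ, 0 < pd1 S.R τ₀ ξ + pd2 S.R τ₀ ξ) →
              ∀ ξ : ℝ,
                (⨅ ξ' : ℝ, (pd1 S.R τ₀ ξ' - pd2 S.R τ₀ ξ'))
                    * (⨅ ξ' : ℝ, (pd1 S.R τ₀ ξ' + pd2 S.R τ₀ ξ'))
                  ≤ (pd1 S.R τ ξ) ^ 2 - (pd2 S.R τ ξ) ^ 2) := by
  refine ⟨3 + K ^ 2 / r₀ ^ 3, by positivity, fun τ₀ τ₁ _ hlen S hR τ hτ => ?_⟩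
  have hsub : Icc τ₀ τ ⊆ Ico τ₀ τ₁ := Icc_subset_Ico_right hτ.2
  set E := supStrip (fun t x => exp (2 * S.ν t x)) τ₀ τ
  have hE : ∀ t ∈ Icc τ₀ τ, ∀ x, exp (2 * S.ν t x) ≤ E := fun t ht x =>
    le_supStrip (g := fun t x => exp (2 * S.ν t x))
      (continuous_exp.comp (continuous_const.mul S.smooth_ν.continuous)) two_pi_pos
      (fun t x => by rw [S.periodic_ν]) ht x
  have hbox : ∀ t ∈ Icc τ₀ τ, ∀ x,
      0 ≤ dalembert S.R t x ∧ dalembert S.R t x ≤ K ^ 2 / (2 * r₀ ^ 3) * E := fun t ht x =>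
    ⟨S.dalembert_R_nonneg (hsub ht) x,
      (S.dalembert_R_le hr₀ (hsub ht) (hR t (hsub ht) x)).trans (by gcongr; exact hE t ht x)⟩
  set S₀ := ⨆ ξ, (|S.R τ₀ ξ| + |pd1 S.R τ₀ ξ| + |pd2 S.R τ₀ ξ|)
  have h₀ : ∀ ξ, |S.R τ₀ ξ| + |pd1 S.R τ₀ ξ| + |pd2 S.R τ₀ ξ| ≤ S₀ :=
    le_ciSup <| bddAbove_range_abs_add_abs_pd1_add_abs_pd2 (S.contDiff_R 1) two_pi_pos
      S.periodic_R τ₀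
  refine ⟨(C1norm_le (S.contDiff_R 2) hbox h₀ hτ.1 (by linarith [hτ.2])).trans ?_,
    fun hu hv ξ => iInf_mul_iInf_le_sq_sub_sq (S.contDiff_R 2) (fun t ht x => (hbox t ht x).1)
      hu hv (right_mem_Icc.2 hτ.1) ξ⟩
  have hS₀ : 0 ≤ S₀ := le_trans (by positivity) (h₀ 0)
  have hE₀ : 0 ≤ (τ - τ₀) * E :=
    mul_nonneg (sub_nonneg.2 hτ.1) ((exp_pos _).le.trans (hE τ₀ (left_mem_Icc.2 hτ.1) 0))
  have hK : 2 * (K ^ 2 / (2 * r₀ ^ 3) * E) * (τ - τ₀) = K ^ 2 / r₀ ^ 3 * ((τ - τ₀) * E) := by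
    field_simp
  nlinarith [mul_nonneg (by positivity : 0 ≤ K ^ 2 / r₀ ^ 3) hS₀]
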